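/- arXiv:2605.04377 — 5 statements merged into one kernel-verified Lean document; each statement's English description precedes it below -/
import Mathlib

section
/- Let f : ℝ → ℝ be continuous and let x, y ∈ ℝ with x < y, f(x) < 0 and f(y) > 0. Then there exists z ∈ (x, y) that is an upward zero-crossing of f; moreover the witness point a can be chosen with x < a ≤ z. -/
/-!
Let `a` be the supremum of the points of `[x, y]` where `f` is negative: then `f a = 0`, `f` takes
negative values arbitrarily close to the left of `a`, and `f ≥ 0` on `[a, y]`. Let `z` be the
infimum of the points of `[a, y]` where `f` is positive (the same construction, reflected): then
`f ≤ 0`, hence `f = 0`, on `[a, z]`, and `f` takes positive values arbitrarily close to the right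
of `z`.
-/

/-- `z` is an upward (negative-to-positive) zero-crossing of `f`. -/
def IsUpCrossing (f : ℝ → ℝ) (z : ℝ) : Prop :=
  ∃ a : ℝ, a ≤ z ∧
    (∀ t ∈ Set.Icc a z, f t = 0) ∧
    (∀ ε > 0, ∃ t ∈ Set.Ico (a - ε) a, f t < 0) ∧
    (∀ ε > 0, ∃ t ∈ Set.Ioc z (z + ε), f t > 0)

open Set Filter Topology

theorem exists_last_exit_from_neg {f : ℝ → ℝ} (hf : Continuous f) {x y : ℝ} (hxy : x ≤ y)
    (hfx : f x < 0) (hfy : 0 ≤ f y) :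
    ∃ a ∈ Ioc x y, f a = 0 ∧ (∀ t ∈ Icc a y, 0 ≤ f t) ∧
      ∀ ε > 0, ∃ t ∈ Ico (a - ε) a, f t < 0 := by
  set S := {t ∈ Icc x y | f t < 0}
  have hxS : x ∈ S := ⟨⟨le_rfl, hxy⟩, hfx⟩
  have hSbdd : BddAbove S := ⟨y, fun t ht => ht.1.2⟩
  set a := sSup S
  have hxa : x ≤ a := le_csSup hSbdd hxS
  have hay : a ≤ y := csSup_le ⟨x, hxS⟩ fun t ht => ht.1.2
  have hnonneg : ∀ t ∈ Ioc a y, 0 ≤ f t := fun t ht =>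
    not_lt.mp fun hneg => ht.1.not_ge (le_csSup hSbdd ⟨⟨hxa.trans ht.1.le, ht.2⟩, hneg⟩)
  have hfa_nonpos : f a ≤ 0 :=
    (isClosed_le hf continuous_const).closure_subset_iff.mpr (fun t ht => ht.2.le)
      (csSup_mem_closure ⟨x, hxS⟩ hSbdd)
  have hfa : f a = 0 := by
    refine le_antisymm hfa_nonpos ?_
    rcases hay.lt_or_eq with hay | hay
    · exact ge_of_tendsto (hf.continuousAt.tendsto.mono_left nhdsWithin_le_nhds)
        (mem_of_superset (Ioo_mem_nhdsGT hay) fun t ht => hnonneg t ⟨ht.1, ht.2.le⟩)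
    · exact hay ▸ hfy
  refine ⟨a, ⟨hxa.lt_of_ne fun h => by rw [← h] at hfa; linarith, hay⟩, hfa, ?_, fun ε hε => ?_⟩
  · rintro t ⟨hat, hty⟩
    rcases hat.eq_or_lt with rfl | hat
    · exact hfa.ge
    · exact hnonneg t ⟨hat, hty⟩
  · obtain ⟨t, htS, hεt⟩ := exists_lt_of_lt_csSup ⟨x, hxS⟩ (sub_lt_self a hε)
    have hta : t ≠ a := by rintro rfl; linarith [htS.2]
    exact ⟨t, ⟨hεt.le, (le_csSup hSbdd htS).lt_of_ne hta⟩, htS.2⟩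

theorem exists_first_entry_into_pos {f : ℝ → ℝ} (hf : Continuous f) {a y : ℝ} (hay : a ≤ y)
    (hfa : f a ≤ 0) (hfy : 0 < f y) :
    ∃ z ∈ Ico a y, (∀ t ∈ Icc a z, f t ≤ 0) ∧
      ∀ ε > 0, ∃ t ∈ Ioc z (z + ε), 0 < f t := by
  obtain ⟨b, ⟨hyb, hba⟩, -, hnonneg, hneg⟩ :=
    exists_last_exit_from_neg (f := fun s => -f (-s)) (by fun_prop) (neg_le_neg hay)
      (by simpa using hfy) (by simpa using hfa)
  refine ⟨-b, ⟨le_neg.mpr hba, neg_lt.mpr hyb⟩, fun t ht => ?_, fun ε hε => ?_⟩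
  · simpa using hnonneg (-t) ⟨le_neg.mpr ht.2, neg_le_neg ht.1⟩
  · obtain ⟨t, ⟨hεt, htb⟩, hft⟩ := hneg ε hε
    exact ⟨-t, ⟨neg_lt_neg htb, by linarith⟩, by simpa using hft⟩

theorem stmt_0 (f : ℝ → ℝ) (hf : Continuous f) (x y : ℝ) (hxy : x < y)
    (hfx : f x < 0) (hfy : 0 < f y) :
    ∃ z ∈ Set.Ioo x y, ∃ a : ℝ, x < a ∧ a ≤ z ∧
      (∀ t ∈ Set.Icc a z, f t = 0) ∧
      (∀ ε > 0, ∃ t ∈ Set.Ico (a - ε) a, f t < 0) ∧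
      (∀ ε > 0, ∃ t ∈ Set.Ioc z (z + ε), f t > 0) := by
  obtain ⟨a, ⟨hxa, hay⟩, hfa, hnonneg, hneg⟩ := exists_last_exit_from_neg hf hxy.le hfx hfy.le
  obtain ⟨z, ⟨haz, hzy⟩, hnonpos, hpos⟩ := exists_first_entry_into_pos hf hay hfa.le hfy
  refine ⟨z, ⟨hxa.trans_le haz, hzy⟩, a, hxa, haz, fun t ht => ?_, hneg, hpos⟩
  exact le_antisymm (hnonpos t ht) (hnonneg t ⟨ht.1, ht.2.trans hzy.le⟩)
end

section
/- Let f : ℝ → ℝ be continuous and let x, y ∈ ℝ with x < y, f(x) > 0 and f(y) < 0. Then there exists z ∈ (x, y) that is a downward zero-crossing of f. -/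
/-!
Take `a` to be the supremum of the points of `[x, y]` where `f > 0`, and `z` the infimum of the
points of `[a, y]` where `f ≠ 0`. Continuity gives `f a = 0`, `f ≤ 0` on `(a, y]` and `f = 0` on
`[a, z]`; the extremal choices make positive values accumulate at `a` from the left and nonzero,
hence negative, values accumulate at `z` from the right.
-/

/-- `z` is a downward (positive-to-negative) zero-crossing of `f`. -/
def IsDownCrossing (f : ℝ → ℝ) (z : ℝ) : Prop :=
  ∃ a : ℝ, a ≤ z ∧
    (∀ t ∈ Set.Icc a z, f t = 0) ∧
    (∀ ε > 0, ∃ t ∈ Set.Ico (a - ε) a, 0 < f t) ∧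
    (∀ ε > 0, ∃ t ∈ Set.Ioc z (z + ε), f t < 0)

open Set Filter Topology

theorem IsDownCrossing.of_frequently {f : ℝ → ℝ} {a z : ℝ} (haz : a ≤ z)
    (hzero : ∀ t ∈ Icc a z, f t = 0) (hpos : ∃ᶠ t in 𝓝[<] a, 0 < f t)
    (hneg : ∃ᶠ t in 𝓝[>] z, f t < 0) : IsDownCrossing f z := by
  refine ⟨a, haz, hzero, fun ε hε => ?_, fun ε hε => ?_⟩
  · obtain ⟨t, ht, hft⟩ := (nhdsLT_basis a).frequently_iff.1 hpos (a - ε) (by linarith)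
    exact ⟨t, Ioo_subset_Ico_self ht, hft⟩
  · obtain ⟨t, ht, hft⟩ := (nhdsGT_basis z).frequently_iff.1 hneg (z + ε) (by linarith)
    exact ⟨t, Ioo_subset_Ioc_self ht, hft⟩

theorem exists_zero_frequently_pos_left_nonpos_right {f : ℝ → ℝ} (hf : Continuous f) {x y : ℝ}
    (hfx : 0 < f x) (hfy : f y ≤ 0) (hxy : x ≤ y) :
    ∃ a ∈ Ioc x y, f a = 0 ∧ (∃ᶠ t in 𝓝[<] a, 0 < f t) ∧ ∀ t ∈ Ioc a y, f t ≤ 0 := by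
  set P := Icc x y ∩ {t | 0 < f t}
  have hxP : x ∈ P := ⟨⟨le_rfl, hxy⟩, hfx⟩
  have hP : IsLUB P (sSup P) := isLUB_csSup ⟨x, hxP⟩ ⟨y, fun t ht => ht.1.2⟩
  set a := sSup P
  have hxa : x ≤ a := hP.1 hxP
  have hay : a ≤ y := hP.2 fun t ht => ht.1.2
  have hnonpos : ∀ t ∈ Ioc a y, f t ≤ 0 := fun t ht =>
    not_lt.1 fun hft => ht.1.not_ge (hP.1 ⟨⟨hxa.trans ht.1.le, ht.2⟩, hft⟩)
  have hfa_nonneg : 0 ≤ f a :=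
    closure_lt_subset_le continuous_const hf (closure_mono inter_subset_right (hP.mem_closure ⟨x, hxP⟩))
  have hfa : f a = 0 := by
    refine le_antisymm ?_ hfa_nonneg
    rcases hay.eq_or_lt with hay | hay
    · exact hay ▸ hfy
    · refine le_of_tendsto (hf.continuousAt.tendsto.mono_left (nhdsWithin_le_nhds (s := Ioi a))) ?_
      filter_upwards [Ioo_mem_nhdsGT hay] with t ht using hnonpos t (Ioo_subset_Ioc_self ht)
  have haP : a ∉ P := fun h => h.2.ne' hfa
  refine ⟨a, ⟨hxa.lt_of_ne fun h => hfx.ne' (h ▸ hfa), hay⟩, hfa, ?_, hnonpos⟩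
  refine (nhdsLT_basis a).frequently_iff.2 fun b hb => ?_
  obtain ⟨c, hcP, hbc, hca⟩ := hP.exists_between' haP hb
  exact ⟨c, ⟨hbc, hca⟩, hcP.2⟩

theorem exists_zero_on_Icc_frequently_ne_right {f : ℝ → ℝ} (hf : Continuous f) {a y : ℝ}
    (hfa : f a = 0) (hfy : f y ≠ 0) (hay : a ≤ y) :
    ∃ z ∈ Ico a y, (∀ t ∈ Icc a z, f t = 0) ∧ ∃ᶠ t in 𝓝[>] z, f t ≠ 0 := by
  set N := Icc a y ∩ {t | f t ≠ 0}
  have hyN : y ∈ N := ⟨⟨hay, le_rfl⟩, hfy⟩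
  have hN : IsGLB N (sInf N) := isGLB_csInf ⟨y, hyN⟩ ⟨a, fun t ht => ht.1.1⟩
  set z := sInf N
  have haz : a ≤ z := hN.2 fun t ht => ht.1.1
  have hzy : z ≤ y := hN.1 hyN
  have hzero_Ico : ∀ t ∈ Ico a z, f t = 0 := fun t ht =>
    not_not.1 fun hft => ht.2.not_ge (hN.1 ⟨⟨ht.1, ht.2.le.trans hzy⟩, hft⟩)
  have hfz : f z = 0 := by
    rcases haz.eq_or_lt with haz | haz
    · exact haz ▸ hfa
    · have hz : z ∈ closure (Ico a z) := by rw [closure_Ico haz.ne]; exact right_mem_Icc.2 haz.le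
      exact closure_minimal hzero_Ico (isClosed_eq hf continuous_const) hz
  have hzero : ∀ t ∈ Icc a z, f t = 0 := fun t ht =>
    ht.2.eq_or_lt.elim (fun h => h ▸ hfz) fun h => hzero_Ico t ⟨ht.1, h⟩
  have hzN : z ∉ N := fun h => h.2 hfz
  refine ⟨z, ⟨haz, hzy.lt_of_ne fun h => hfy (h ▸ hfz)⟩, hzero, ?_⟩
  refine (nhdsGT_basis z).frequently_iff.2 fun b hb => ?_
  obtain ⟨c, hcN, hzc, hcb⟩ := hN.exists_between' hzN hb
  exact ⟨c, ⟨hzc, hcb⟩, hcN.2⟩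

theorem stmt_1 (f : ℝ → ℝ) (hf : Continuous f) (x y : ℝ) (hxy : x < y)
    (hfx : 0 < f x) (hfy : f y < 0) :
    ∃ z ∈ Set.Ioo x y, IsDownCrossing f z := by
  obtain ⟨a, ⟨hxa, hay⟩, hfa, hpos, hnonpos⟩ :=
    exists_zero_frequently_pos_left_nonpos_right hf hfx hfy.le hxy.le
  obtain ⟨z, ⟨haz, hzy⟩, hzero, hne⟩ := exists_zero_on_Icc_frequently_ne_right hf hfa hfy.ne hay
  refine ⟨z, ⟨hxa.trans_le haz, hzy⟩, .of_frequently haz hzero hpos ?_⟩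
  exact (hne.and_eventually (Ioo_mem_nhdsGT hzy)).mono fun t ⟨hft, hzt, hty⟩ =>
    (hnonpos t ⟨haz.trans_lt hzt, hty.le⟩).lt_of_ne hft
end

section
/- Let g : ℝ → ℝ be continuous with g(0) < 0, and suppose g(t₁) > 0 for some t₁ > 0. Then there exists τ ∈ (0, t₁) such that τ is an upward zero-crossing of g and no t' ∈ (0, τ) is an upward zero-crossing of g; that is, g has a first upward zero-crossing, and it occurs strictly before t₁. -/
open Set

theorem IsUpCrossing.exists_pos_of_lt {f : ℝ → ℝ} {z w : ℝ} (h : IsUpCrossing f z) (hzw : z < w) :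
    ∃ t ∈ Ioc z w, 0 < f t := by
  obtain ⟨-, -, -, -, hright⟩ := h
  obtain ⟨t, ⟨hzt, htw⟩, hft⟩ := hright (w - z) (sub_pos.2 hzw)
  exact ⟨t, ⟨hzt, by linarith⟩, hft⟩

theorem exists_first_pos_time {g : ℝ → ℝ} {a b : ℝ} (hab : a ≤ b) (hg : ContinuousOn g (Icc a b))
    (ha : g a < 0) (hb : 0 < g b) :
    ∃ u ∈ Ioo a b, g u = 0 ∧ (∀ t ∈ Icc a u, g t ≤ 0) ∧
      ∀ ε > 0, ∃ t ∈ Ioc u (u + ε), 0 < g t := by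
  set P := {t ∈ Icc a b | 0 < g t}
  have hPne : P.Nonempty := ⟨b, ⟨hab, le_rfl⟩, hb⟩
  have hPbdd : BddBelow P := ⟨a, fun t ht => ht.1.1⟩
  set u := sInf P
  have hau : a ≤ u := le_csInf hPne fun t ht => ht.1.1
  have hub : u ≤ b := csInf_le hPbdd ⟨⟨hab, le_rfl⟩, hb⟩
  have hg_before : ∀ t ∈ Ico a u, g t ≤ 0 := fun t ht =>
    not_lt.1 fun hpos => notMem_of_lt_csInf ht.2 hPbdd ⟨⟨ht.1, ht.2.le.trans hub⟩, hpos⟩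
  have hgu_nonpos : g u ≤ 0 := by
    rcases hau.eq_or_lt with hau' | hau'
    · exact hau' ▸ ha.le
    · have hcont : ContinuousWithinAt g (Ico a u) u :=
        (hg u ⟨hau, hub⟩).mono (Ico_subset_Icc_self.trans (Icc_subset_Icc_right hub))
      exact hcont.closure_le (by simp [closure_Ico hau'.ne, hau])
        continuousWithinAt_const hg_before
  have hgu_nonneg : 0 ≤ g u :=
    ContinuousWithinAt.closure_le (csInf_mem_closure hPne hPbdd) continuousWithinAt_const
      ((hg u ⟨hau, hub⟩).mono fun t ht => ht.1) fun t ht => ht.2.le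
  have hgu : g u = 0 := le_antisymm hgu_nonpos hgu_nonneg
  refine ⟨u, ⟨?_, ?_⟩, hgu, ?_, ?_⟩
  · exact hau.lt_of_ne fun h => by rw [← h] at hgu; linarith
  · exact hub.lt_of_ne fun h => by rw [h] at hgu; linarith
  · intro t ⟨hat, htu⟩
    rcases htu.lt_or_eq with htu | rfl
    exacts [hg_before t ⟨hat, htu⟩, hgu_nonpos]
  · intro ε hε
    obtain ⟨t, htP, htu⟩ := exists_lt_of_csInf_lt hPne (lt_add_of_pos_right u hε)
    have hut : u < t := (csInf_le hPbdd htP).lt_of_ne fun h => by rw [← h] at htP; linarith [htP.2]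
    exact ⟨t, ⟨hut, htu.le⟩, htP.2⟩

theorem isUpCrossing_of_nonpos {g : ℝ → ℝ} {a u : ℝ} (hau : a ≤ u) (hg : ContinuousOn g (Icc a u))
    (ha : g a < 0) (hu : g u = 0) (hle : ∀ t ∈ Icc a u, g t ≤ 0)
    (hright : ∀ ε > 0, ∃ t ∈ Ioc u (u + ε), 0 < g t) : IsUpCrossing g u := by
  set N := {t ∈ Icc a u | g t < 0}
  have hNne : N.Nonempty := ⟨a, ⟨le_rfl, hau⟩, ha⟩
  have hNbdd : BddAbove N := ⟨u, fun t ht => ht.1.2⟩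
  set c := sSup N
  have hac : a ≤ c := le_csSup hNbdd ⟨⟨le_rfl, hau⟩, ha⟩
  have hcu : c ≤ u := csSup_le hNne fun t ht => ht.1.2
  have hzero_after : ∀ t ∈ Ioc c u, g t = 0 := fun t ht =>
    (hle t ⟨hac.trans ht.1.le, ht.2⟩).antisymm <| not_lt.1 fun hneg =>
      notMem_of_csSup_lt ht.1 hNbdd ⟨⟨hac.trans ht.1.le, ht.2⟩, hneg⟩
  have hzero : ∀ t ∈ Icc c u, g t = 0 := by
    rcases hcu.eq_or_lt with hcu' | hcu'
    · intro t ht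
      rwa [le_antisymm ht.2 (hcu' ▸ ht.1)]
    · exact Set.EqOn.of_subset_closure hzero_after (hg.mono (Icc_subset_Icc_left hac))
        continuousOn_const Ioc_subset_Icc_self (closure_Ioc hcu'.ne).symm.subset
  refine ⟨c, hcu, hzero, fun ε hε => ?_, hright⟩
  obtain ⟨t, htN, hct⟩ := exists_lt_of_lt_csSup hNne (sub_lt_self c hε)
  have htc : t < c := (le_csSup hNbdd htN).lt_of_ne fun htc =>
    (hzero t ⟨htc.ge, htc ▸ hcu⟩).not_lt htN.2
  exact ⟨t, ⟨hct.le, htc⟩, htN.2⟩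

theorem stmt_8 (g : ℝ → ℝ) (hg : Continuous g) (hg0 : g 0 < 0)
    (t₁ : ℝ) (ht₁ : 0 < t₁) (hgt₁ : 0 < g t₁) :
    ∃ τ ∈ Set.Ioo 0 t₁, IsUpCrossing g τ ∧
      ∀ t' ∈ Set.Ioo (0 : ℝ) τ, ¬ IsUpCrossing g t' := by
  obtain ⟨u, hu, hgu, hle, hright⟩ := exists_first_pos_time ht₁.le hg.continuousOn hg0 hgt₁
  refine ⟨u, hu, isUpCrossing_of_nonpos hu.1.le hg.continuousOn hg0 hgu hle hright, ?_⟩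
  rintro t' ⟨ht'0, ht'u⟩ hcross
  obtain ⟨t, ⟨ht't, htu⟩, hpos⟩ := hcross.exists_pos_of_lt ht'u
  exact (hle t ⟨(ht'0.trans ht't).le, htu⟩).not_gt hpos
end

section
/- Let g : ℝ → ℝ be continuous with g(0) = 0, and suppose g has derivative d at 0 with d < 0. If g(t₁) > 0 for some t₁ > 0, then there exists τ ∈ (0, t₁) such that τ is an upward zero-crossing of g and no t' ∈ (0, τ) is an upward zero-crossing of g. -/
/-! The negative derivative makes `g` negative on some `(0, δ]`. Let `τ` be the infimum of the
times in `[δ, t₁]` where `g > 0`, and `a` the supremum of the times in `[δ, τ]` where `g < 0`.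
By continuity `g` vanishes on `[a, τ]`, so `τ` is an upward crossing, and since `g ≤ 0` on
`(0, τ]` no earlier point can be followed immediately by positive values. -/

open Set Filter Topology

theorem HasDerivAt.eventually_nhdsGT_lt_of_neg {f : ℝ → ℝ} {f' x : ℝ} (hf : HasDerivAt f f' x)
    (hf' : f' < 0) : ∀ᶠ t in 𝓝[>] x, f t < f x := by
  have hslope : Tendsto (slope f x) (𝓝[>] x) (𝓝 f') :=
    (hasDerivWithinAt_iff_tendsto_slope' self_notMem_Ioi).1 hf.hasDerivWithinAt
  filter_upwards [hslope.eventually (eventually_lt_nhds hf'), self_mem_nhdsWithin] with t ht hxt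
  rw [slope_def_field, div_neg_iff] at ht
  rcases ht with ⟨-, h⟩ | ⟨h, -⟩
  · exact absurd h (not_lt.2 (sub_pos.2 hxt).le)
  · exact sub_neg.1 h

section Crossing

variable {f : ℝ → ℝ} {x y c : ℝ}

theorem exists_zero_nonpos_left_pos_right (hf : Continuous f) (hxy : x ≤ y) (hx : f x < 0)
    (hy : 0 < f y) :
    ∃ z ∈ Ioo x y, f z = 0 ∧ (∀ t ∈ Icc x z, f t ≤ 0) ∧
      ∀ ε > 0, ∃ t ∈ Ioc z (z + ε), 0 < f t := by
  set P := {t | t ∈ Icc x y ∧ 0 < f t}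
  have hP : P.Nonempty := ⟨y, ⟨hxy, le_rfl⟩, hy⟩
  have hPbdd : BddBelow P := ⟨x, fun t ht => ht.1.1⟩
  have hxc : x ≤ sInf P := le_csInf hP fun t ht => ht.1.1
  have hcy : sInf P ≤ y := csInf_le hPbdd ⟨⟨hxy, le_rfl⟩, hy⟩
  have hbefore : ∀ t ∈ Ico x (sInf P), f t ≤ 0 := fun t ht =>
    not_lt.1 fun hpos => notMem_of_lt_csInf ht.2 hPbdd ⟨⟨ht.1, ht.2.le.trans hcy⟩, hpos⟩
  have hc_nonneg : 0 ≤ f (sInf P) :=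
    (isClosed_le continuous_const hf).closure_subset_iff.2 (fun t ht => ht.2.le)
      (csInf_mem_closure hP hPbdd)
  have hxc' : x < sInf P := hxc.lt_of_ne fun h => by rw [← h] at hc_nonneg; linarith
  have hc_nonpos : f (sInf P) ≤ 0 :=
    (isClosed_le hf continuous_const).closure_subset_iff.2 hbefore
      (by rw [closure_Ico hxc'.ne]; exact right_mem_Icc.2 hxc)
  have hc : f (sInf P) = 0 := le_antisymm hc_nonpos hc_nonneg
  refine ⟨sInf P, ⟨hxc', hcy.lt_of_ne fun h => by rw [h] at hc; linarith⟩, hc, fun t ht => ?_,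
    fun ε hε => ?_⟩
  · rcases ht.2.lt_or_eq with h | rfl
    · exact hbefore t ⟨ht.1, h⟩
    · exact hc_nonpos
  · obtain ⟨t, htP, htc⟩ := exists_lt_of_csInf_lt hP (lt_add_of_pos_right _ hε)
    refine ⟨t, ⟨(csInf_le hPbdd htP).lt_of_ne ?_, htc.le⟩, htP.2⟩
    rintro rfl
    exact htP.2.ne' hc

theorem exists_zero_on_Icc_neg_left (hf : Continuous f) (hxc : x ≤ c) (hx : f x < 0)
    (hc : f c = 0) (hle : ∀ t ∈ Icc x c, f t ≤ 0) :
    ∃ a ∈ Ioc x c, (∀ t ∈ Icc a c, f t = 0) ∧ ∀ ε > 0, ∃ t ∈ Ico (a - ε) a, f t < 0 := by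
  set S := {t | t ∈ Icc x c ∧ f t < 0}
  have hS : S.Nonempty := ⟨x, ⟨le_rfl, hxc⟩, hx⟩
  have hSbdd : BddAbove S := ⟨c, fun t ht => ht.1.2⟩
  have hxa : x ≤ sSup S := le_csSup hSbdd ⟨⟨le_rfl, hxc⟩, hx⟩
  have hac : sSup S ≤ c := csSup_le hS fun t ht => ht.1.2
  have hafter : ∀ t ∈ Ioc (sSup S) c, 0 ≤ f t := fun t ht =>
    not_lt.1 fun hneg => notMem_of_csSup_lt ht.1 hSbdd ⟨⟨hxa.trans ht.1.le, ht.2⟩, hneg⟩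
  have hzero : ∀ t ∈ Icc (sSup S) c, f t = 0 := by
    intro t ht
    rcases ht.1.eq_or_lt with rfl | h
    · refine le_antisymm (hle _ ⟨hxa, hac⟩) ?_
      rcases hac.eq_or_lt with h | h
      · rw [h, hc]
      · exact (isClosed_le continuous_const hf).closure_subset_iff.2 hafter
          (by rw [closure_Ioc h.ne]; exact left_mem_Icc.2 hac)
    · exact le_antisymm (hle t ⟨hxa.trans h.le, ht.2⟩) (hafter t ⟨h, ht.2⟩)
  have ha : f (sSup S) = 0 := hzero _ ⟨le_rfl, hac⟩
  refine ⟨sSup S, ⟨hxa.lt_of_ne fun h => by rw [← h] at ha; linarith, hac⟩, hzero,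
    fun ε hε => ?_⟩
  obtain ⟨t, htS, hat⟩ := exists_lt_of_lt_csSup hS (sub_lt_self _ hε)
  refine ⟨t, ⟨hat.le, (le_csSup hSbdd htS).lt_of_ne ?_⟩, htS.2⟩
  rintro rfl
  exact htS.2.ne ha

theorem exists_isUpCrossing_of_neg_of_pos (hf : Continuous f) (hxy : x ≤ y) (hx : f x < 0)
    (hy : 0 < f y) : ∃ z ∈ Ioo x y, IsUpCrossing f z ∧ ∀ t ∈ Icc x z, f t ≤ 0 := by
  obtain ⟨z, hz, hfz, hle, hpos⟩ := exists_zero_nonpos_left_pos_right hf hxy hx hy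
  obtain ⟨a, ha, hzero, hneg⟩ := exists_zero_on_Icc_neg_left hf hz.1.le hx hfz hle
  exact ⟨z, hz, ⟨a, ha.2, hzero, hneg, hpos⟩, hle⟩

theorem not_isUpCrossing_of_nonpos_on_Ioc (hxy : x < y) (h : ∀ t ∈ Ioc x y, f t ≤ 0) :
    ¬ IsUpCrossing f x := by
  rintro ⟨-, -, -, -, hpos⟩
  obtain ⟨t, ht, hft⟩ := hpos (y - x) (sub_pos.2 hxy)
  exact (h t ⟨ht.1, by linarith [ht.2]⟩).not_gt hft

end Crossing

theorem stmt_9 (g : ℝ → ℝ) (hg : Continuous g) (hg0 : g 0 = 0)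
    (d : ℝ) (hd : HasDerivAt g d 0) (hdneg : d < 0)
    (t₁ : ℝ) (ht₁ : 0 < t₁) (hgt₁ : 0 < g t₁) :
    ∃ τ ∈ Set.Ioo 0 t₁, IsUpCrossing g τ ∧
      ∀ t' ∈ Set.Ioo (0 : ℝ) τ, ¬ IsUpCrossing g t' := by
  obtain ⟨δ, hδ, hneg⟩ := mem_nhdsGT_iff_exists_Ioc_subset.1
    ((hd.eventually_nhdsGT_lt_of_neg hdneg).and (Ioo_mem_nhdsGT ht₁))
  have hδt₁ : δ < t₁ := (hneg ⟨hδ, le_rfl⟩).2.2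
  have hgδ : g δ < 0 := hg0 ▸ (hneg ⟨hδ, le_rfl⟩).1
  obtain ⟨τ, hτ, hcross, hle⟩ := exists_isUpCrossing_of_neg_of_pos hg hδt₁.le hgδ hgt₁
  refine ⟨τ, ⟨hδ.out.trans hτ.1, hτ.2⟩, hcross, fun t' ht' => ?_⟩
  refine not_isUpCrossing_of_nonpos_on_Ioc ht'.2 fun t ht => ?_
  rcases le_total t δ with htδ | hδt
  · exact (hg0 ▸ (hneg ⟨ht'.1.trans ht.1, htδ⟩).1 : g t < 0).le
  · exact hle t ⟨hδt, ht.2⟩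
end

section
/- Let T > 0 and let g : ℝ → ℝ be continuous with g(0) < 0. If no t' ∈ (0, T) is an upward zero-crossing of g, then g(t) ≤ 0 for all t ∈ [0, T]. -/
open Set OrderDual

section LastExit

variable {α β : Type*} [ConditionallyCompleteLinearOrder α] [TopologicalSpace α] [OrderTopology α]
  [DenselyOrdered α] [LinearOrder β] [TopologicalSpace β] [OrderClosedTopology β]
  {f : α → β} {x y : α} {c : β}

theorem ContinuousOn.exists_last_exit_Iio (hf : ContinuousOn f (Icc x y)) (hxy : x ≤ y)
    (hx : f x < c) (hy : c ≤ f y) :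
    ∃ a ∈ Ioc x y, f a = c ∧ (∀ t ∈ Ioc a y, c ≤ f t) ∧ ∀ a' < a, ∃ t ∈ Ioo a' a, f t < c := by
  set S := {t ∈ Icc x y | f t < c}
  have hxS : x ∈ S := ⟨⟨le_rfl, hxy⟩, hx⟩
  have hS : BddAbove S := ⟨y, fun t ht => ht.1.2⟩
  set a := sSup S
  have hxa : x ≤ a := le_csSup hS hxS
  have hay : a ≤ y := csSup_le ⟨x, hxS⟩ fun t ht => ht.1.2
  have h_after : ∀ t ∈ Ioc a y, c ≤ f t := fun t ht =>
    not_lt.1 fun hft => (le_csSup hS ⟨⟨hxa.trans ht.1.le, ht.2⟩, hft⟩).not_gt ht.1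
  have hfa_le : f a ≤ c := by
    have hclosed := hf.preimage_isClosed_of_isClosed isClosed_Icc (isClosed_Iic (a := c))
    have hsub : S ⊆ Icc x y ∩ f ⁻¹' Iic c := fun t ht => ⟨ht.1, ht.2.le⟩
    exact (closure_minimal hsub hclosed (csSup_mem_closure ⟨x, hxS⟩ hS)).2
  have hfa_ge : c ≤ f a := by
    rcases hay.eq_or_lt with hay | hay
    · exact hay ▸ hy
    have hclosed := hf.preimage_isClosed_of_isClosed isClosed_Icc (isClosed_Ici (a := c))
    have hsub : Ioc a y ⊆ Icc x y ∩ f ⁻¹' Ici c := fun t ht =>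
      ⟨⟨hxa.trans ht.1.le, ht.2⟩, h_after t ht⟩
    have := closure_minimal hsub hclosed
    rw [closure_Ioc hay.ne] at this
    exact (this ⟨le_rfl, hay.le⟩).2
  have hfa : f a = c := le_antisymm hfa_le hfa_ge
  refine ⟨a, ⟨hxa.lt_of_ne fun h => hx.ne (h ▸ hfa), hay⟩, hfa, h_after, fun a' ha' => ?_⟩
  obtain ⟨t, htS, hat⟩ := exists_lt_of_lt_csSup ⟨x, hxS⟩ ha'
  exact ⟨t, ⟨hat, (le_csSup hS htS).lt_of_ne fun h => htS.2.ne (h ▸ hfa)⟩, htS.2⟩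

end LastExit

theorem ContinuousOn.exists_isUpCrossing_mem_Ioo {f : ℝ → ℝ} {x y : ℝ}
    (hf : ContinuousOn f (Icc x y)) (hxy : x ≤ y) (hx : f x < 0) (hy : 0 < f y) :
    ∃ z ∈ Ioo x y, IsUpCrossing f z := by
  obtain ⟨a, hxa, hfa, h_after, h_before⟩ := hf.exists_last_exit_Iio hxy hx hy.le
  have hf' : ContinuousOn (toDual ∘ f ∘ ofDual) (Icc (toDual y) (toDual a)) := by
    rw [Icc_toDual]
    exact continuous_toDual.comp_continuousOn
      (hf.comp continuous_ofDual.continuousOn fun t ht => Icc_subset_Icc_left hxa.1.le ht)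
  obtain ⟨b, hb, hfb, h_nonpos, h_pos⟩ :=
    hf'.exists_last_exit_Iio (c := toDual (0 : ℝ)) (toDual_le_toDual.2 hxa.2) hy
      (toDual_le_toDual.2 hfa.le)
  obtain ⟨b, rfl⟩ := toDual.surjective b
  rw [Ioc_toDual] at hb
  refine ⟨b, ⟨hxa.1.trans_le hb.1, hb.2⟩, a, hb.1, fun t ht => ?_, fun ε hε => ?_, fun ε hε => ?_⟩
  · rcases ht.2.lt_or_eq with htb | rfl
    · have hle : f t ≤ 0 := h_nonpos (toDual t) ⟨toDual_lt_toDual.2 htb, toDual_le_toDual.2 ht.1⟩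
      rcases ht.1.eq_or_lt with rfl | hat
      · exact hfa
      · exact le_antisymm hle (h_after t ⟨hat, htb.le.trans hb.2.le⟩)
    · exact hfb
  · obtain ⟨t, ht, hft⟩ := h_before (a - ε) (by linarith)
    exact ⟨t, ⟨ht.1.le, ht.2⟩, hft⟩
  · obtain ⟨t, ht, hft⟩ := h_pos (toDual (b + ε)) (toDual_lt_toDual.2 (by linarith))
    exact ⟨ofDual t, ⟨ht.2, ht.1.le⟩, hft⟩

theorem stmt_10_general (T : ℝ) (g : ℝ → ℝ) (hg : Continuous g)
    (hg0 : g 0 < 0)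
    (hnoZC : ∀ t' ∈ Set.Ioo (0 : ℝ) T, ¬ IsUpCrossing g t') :
    ∀ t ∈ Set.Icc (0 : ℝ) T, g t ≤ 0 := by
  intro t ht
  by_contra! hgt
  obtain ⟨z, hz, hzc⟩ := hg.continuousOn.exists_isUpCrossing_mem_Ioo ht.1 hg0 hgt
  exact hnoZC z ⟨hz.1, hz.2.trans_le ht.2⟩ hzc

theorem stmt_10 (T : ℝ) (hT : 0 < T) (g : ℝ → ℝ) (hg : Continuous g)
    (hg0 : g 0 < 0)
    (hnoZC : ∀ t' ∈ Set.Ioo (0 : ℝ) T, ¬ IsUpCrossing g t') :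
    ∀ t ∈ Set.Icc (0 : ℝ) T, g t ≤ 0 :=
  stmt_10_general T g hg hg0 hnoZC
end
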